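/- For the head-on collision system with G(q) = e^{-|q|}, c > 0, and P = 0, the functions q(t) = −2 log(sech(ct)) and p(t) = 2c/tanh(ct) satisfy the ODEs q̇ = (1 − e^{−|q|})p and ṗ = −(p²/2) sgn(q) e^{−|q|} for all t > 0. -/

import Mathlib

open Real

/-!
Writing `x = c t`, one has `q = 2 log cosh x ≥ 0`, so `sgn q = 1` and `e^{-|q|} = sech² x`, while
`p = 2c coth x`. Both equations then reduce to `(log cosh)' = tanh`, `coth' = -csch²` and
`cosh² - sinh² = 1`.
-/

theorem hasDerivAt_log_cosh (x : ℝ) : HasDerivAt (fun y => log (cosh y)) (tanh x) x := by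
  rw [tanh_eq_sinh_div_cosh]
  exact (hasDerivAt_cosh x).log (cosh_pos x).ne'

theorem hasDerivAt_inv_tanh {x : ℝ} (hx : x ≠ 0) :
    HasDerivAt (fun y => (tanh y)⁻¹) (-(sinh x ^ 2)⁻¹) x := by
  have hcoth : (fun y => (tanh y)⁻¹) = fun y => cosh y / sinh y := by
    funext y
    rw [tanh_eq_sinh_div_cosh, inv_div]
  rw [hcoth]
  refine ((hasDerivAt_cosh x).div (hasDerivAt_sinh x) (sinh_ne_zero.mpr hx)).congr_deriv ?_
  field_simp
  linear_combination -cosh_sq_sub_sinh_sq x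

theorem exp_neg_abs_two_mul_log_cosh (x : ℝ) :
    exp (-|2 * log (cosh x)|) = (cosh x ^ 2)⁻¹ := by
  have hlog : 0 ≤ log (cosh x) := log_nonneg (one_le_cosh x)
  rw [abs_of_nonneg (by positivity), exp_neg, two_mul, exp_add, exp_log (cosh_pos x), sq]

theorem sign_two_mul_log_cosh {x : ℝ} (hx : x ≠ 0) : Real.sign (2 * log (cosh x)) = 1 :=
  Real.sign_of_pos (mul_pos two_pos (log_pos (one_lt_cosh.mpr hx)))

/-- For `G(q) = e^{−|q|}` and `P = 0`, the functions
`q(t) = −2 log(sech(ct))` and `p(t) = 2c/tanh(ct)` satisfy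
`q̇ = (1 − e^{−|q|})p` and `ṗ = −(p²/2) sgn(q) e^{−|q|}` for all `t > 0`. -/
theorem exact_head_on_solution_b_three_halves
    (c : ℝ) (hc : 0 < c) :
    let q : ℝ → ℝ := fun t => -2 * Real.log (1 / Real.cosh (c * t))
    let p : ℝ → ℝ := fun t => 2 * c / Real.tanh (c * t)
    ∀ t : ℝ, 0 < t →
      HasDerivAt q ((1 - Real.exp (-|q t|)) * p t) t ∧
      HasDerivAt p (-((p t) ^ 2 / 2) * Real.sign (q t) * Real.exp (-|q t|)) t := by
  intro q p t ht
  have hx : c * t ≠ 0 := (mul_pos hc ht).ne'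
  have hq : q = fun s => 2 * log (cosh (c * s)) := by
    funext s
    simp only [q, one_div, log_inv, neg_mul_neg]
  have hp : p = fun s => 2 * c * (tanh (c * s))⁻¹ := rfl
  have hsinh : sinh (c * t) ≠ 0 := sinh_ne_zero.mpr hx
  simp only [hq, hp, exp_neg_abs_two_mul_log_cosh, sign_two_mul_log_cosh hx]
  constructor
  · refine (((hasDerivAt_log_cosh _).comp t (hasDerivAt_const_mul c)).const_mul 2).congr_deriv ?_
    rw [tanh_eq_sinh_div_cosh]
    field_simp
    linear_combination -cosh_sq_sub_sinh_sq (c * t)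
  · refine (((hasDerivAt_inv_tanh hx).comp t (hasDerivAt_const_mul c)).const_mul (2 * c)).congr_deriv ?_
    rw [tanh_eq_sinh_div_cosh]
    field_simp
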